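/- arXiv:2310.03506 — 10 statements merged into one kernel-verified Lean document; each statement's English description precedes it below -/
import Mathlib

section
/- For every integer n ≥ 2, the upper total domination number of the path P_n equals 2⌊(n+1)/3⌋. -/
variable {V : Type*}

/-- `S` is a total dominating set of `G`: every vertex has a neighbor in `S`. -/
def isTDSet (G : SimpleGraph V) (S : Set V) : Prop := ∀ v : V, ∃ u ∈ S, G.Adj v u

/-- `S` is a minimal total dominating set of `G`. -/
def isMinTDSet (G : SimpleGraph V) (S : Set V) : Prop :=
  isTDSet G S ∧ ∀ T : Set V, T ⊂ S → ¬ isTDSet G T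

/-- Upper total domination number `Γ_t`. -/
noncomputable def upperTD (G : SimpleGraph V) [Fintype V] : ℕ :=
  sSup {n | ∃ S : Finset V, isMinTDSet G ↑S ∧ S.card = n}

/-- Total domination number `γ_t`. -/
noncomputable def totalDomNum (G : SimpleGraph V) [Fintype V] : ℕ :=
  sInf {n | ∃ S : Finset V, isTDSet G ↑S ∧ S.card = n}

/-- `S` is an open-open irredundant set: each `v ∈ S` has a neighbor not adjacent
to any other vertex of `S`, i.e. `N(v) \ N(S \ {v}) ≠ ∅`. -/
def isOOIrr (G : SimpleGraph V) (S : Set V) : Prop :=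
  ∀ v ∈ S, ∃ w, G.Adj v w ∧ ∀ u ∈ S, u ≠ v → ¬ G.Adj u w

/-- Open-open irredundance number `OOIR`. -/
noncomputable def ooirNum (G : SimpleGraph V) [Fintype V] : ℕ :=
  sSup {n | ∃ S : Finset V, isOOIrr G ↑S ∧ S.card = n}

/-- `M` is an induced matching: a set of edges of `G` whose endpoints induce a
1-regular subgraph (no two distinct edges share or join endpoints). -/
def isInducedMatching (G : SimpleGraph V) (M : Set (Sym2 V)) : Prop :=
  (∀ e ∈ M, e ∈ G.edgeSet) ∧
  ∀ e ∈ M, ∀ f ∈ M, e ≠ f → ∀ u ∈ e, ∀ v ∈ f, u ≠ v ∧ ¬ G.Adj u v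

/-- Induced matching number `ν_I`. -/
noncomputable def inducedMatchingNum (G : SimpleGraph V) [Fintype V] : ℕ :=
  sSup {n | ∃ M : Finset (Sym2 V), isInducedMatching G ↑M ∧ M.card = n}

/-- `L` is a total dominating sequence of `G`. -/
def isTDSeq (G : SimpleGraph V) (L : List V) : Prop :=
  L.Nodup ∧ isTDSet G {v | v ∈ L} ∧
  ∀ (i : ℕ) (h : i < L.length), ∃ w, G.Adj L[i] w ∧ ∀ u ∈ L.take i, ¬ G.Adj u w

/-- Grundy total domination number. -/
noncomputable def grundyTD (G : SimpleGraph V) [Fintype V] : ℕ :=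
  sSup {n | ∃ L : List V, isTDSeq G L ∧ L.length = n}



/-!
A set `S` of vertices is a minimal total dominating set iff it totally dominates and every vertex
of `S` has a private neighbour. On a path this pins down how `S` begins: writing `S` for a member
and `_` for a non-member, the first vertices read `SS_` or `_SS_`, and the rest of `S` is again a
minimal total dominating set of the remaining path; or they read `_SSS_` or `_SSSS_`, and the rest
is one that avoids the first vertex of the remaining path. Induction on `n`, proving the sharper
bound `⌊2n/3⌋` when the first vertex is not in `S`, gives `|S| ≤ 2⌊(n+1)/3⌋`. Repeating `SS_`,
or `_SS` when `n ≡ 1 [MOD 3]`, attains the bound.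
-/

open Set

theorem isMinTDSet_iff {G : SimpleGraph V} {S : Set V} :
    isMinTDSet G S ↔ isTDSet G S ∧ isOOIrr G S := by
  refine and_congr_right fun hS => ⟨fun hmin v hv => ?_, fun hirr T hTS hT => ?_⟩
  · obtain ⟨w, hw⟩ : ∃ w, ∀ u ∈ S \ {v}, ¬ G.Adj w u := by
      simpa [isTDSet] using hmin (S \ {v}) (sdiff_singleton_ssubset.2 hv)
    obtain ⟨u, hu, hwu⟩ := hS w
    obtain rfl : u = v := by_contra fun hne => hw u ⟨hu, hne⟩ hwu
    exact ⟨w, hwu.symm, fun u' hu' hne hadj => hw u' ⟨hu', hne⟩ hadj.symm⟩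
  · obtain ⟨v, hvS, hvT⟩ := exists_of_ssubset hTS
    obtain ⟨w, -, hw⟩ := hirr v hvS
    obtain ⟨u, huT, hwu⟩ := hT w
    exact hw u (hTS.subset huT) (fun h => hvT (h ▸ huT)) hwu.symm

/-- Minimal total dominating sets of `P_n`, in the form of `isMinTDSet_iff`, on vertices numbered
in `ℕ` so that a path can be cut and shifted. -/
structure IsPathMinTD (n : ℕ) (s : Set ℕ) : Prop where
  lt_of_mem : ∀ i ∈ s, i < n
  exists_adj : ∀ i < n, ∃ j ∈ s, i + 1 = j ∨ j + 1 = i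
  exists_private : ∀ v ∈ s, ∃ w < n, (v + 1 = w ∨ w + 1 = v) ∧
    ∀ u ∈ s, u + 1 = w ∨ w + 1 = u → u = v

theorem isMinTDSet_pathGraph_iff {n : ℕ} {S : Set (Fin n)} :
    isMinTDSet (SimpleGraph.pathGraph n) S ↔ IsPathMinTD n (Fin.val '' S) := by
  simp only [isMinTDSet_iff, isTDSet, isOOIrr, SimpleGraph.pathGraph_adj]
  constructor
  · rintro ⟨hT, hO⟩
    refine ⟨?_, fun i hi => ?_, ?_⟩
    · rintro _ ⟨v, -, rfl⟩
      exact v.isLt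
    · obtain ⟨u, hu, hadj⟩ := hT ⟨i, hi⟩
      exact ⟨u, mem_image_of_mem _ hu, hadj⟩
    · rintro _ ⟨v, hv, rfl⟩
      obtain ⟨w, hvw, hw⟩ := hO v hv
      refine ⟨w, w.isLt, hvw, ?_⟩
      rintro _ ⟨u, hu, rfl⟩ hadj
      by_contra hne
      exact hw u hu (fun h => hne (congrArg Fin.val h)) hadj
  · intro h
    refine ⟨fun v => ?_, fun v hv => ?_⟩
    · obtain ⟨_, ⟨u, hu, rfl⟩, hadj⟩ := h.exists_adj v v.isLt
      exact ⟨u, hu, hadj⟩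
    · obtain ⟨w, hw, hvw, hpriv⟩ := h.exists_private v (mem_image_of_mem _ hv)
      exact ⟨⟨w, hw⟩, hvw, fun u hu hne hadj =>
        hne (Fin.ext (hpriv u (mem_image_of_mem _ hu) hadj))⟩

theorem Set.ncard_le_add_ncard_preimage_add {s : Set ℕ} (hs : s.Finite) {a b m : ℕ}
    (hhead : ∀ i ∈ s, i < m → a ≤ i ∧ i ≤ b) :
    s.ncard ≤ b + 1 - a + ((m + ·) ⁻¹' s).ncard := by
  have hpre : ((m + ·) ⁻¹' s).Finite := hs.preimage (add_right_injective m).injOn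
  have hsub : s ⊆ Icc a b ∪ (m + ·) '' ((m + ·) ⁻¹' s) := by
    intro i hi
    by_cases him : i < m
    · exact Or.inl (hhead i hi him)
    · refine Or.inr ⟨i - m, ?_, by simp only; omega⟩
      simpa only [mem_preimage, Nat.add_sub_cancel' (not_lt.1 him)] using hi
  calc s.ncard ≤ (Icc a b ∪ (m + ·) '' ((m + ·) ⁻¹' s)).ncard :=
        ncard_le_ncard hsub ((finite_Icc a b).union (hpre.image _))
    _ ≤ (Icc a b).ncard + ((m + ·) '' ((m + ·) ⁻¹' s)).ncard := ncard_union_le _ _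
    _ ≤ b + 1 - a + ((m + ·) ⁻¹' s).ncard := by
        rw [ncard_Icc_nat]
        exact Nat.add_le_add_left (ncard_image_le hpre) _

namespace IsPathMinTD

variable {n : ℕ} {s : Set ℕ}

theorem finite (h : IsPathMinTD n s) : s.Finite :=
  (finite_Iio n).subset h.lt_of_mem

theorem one_mem (h : IsPathMinTD n s) (hn : 0 < n) : 1 ∈ s := by
  obtain ⟨j, hj, hadj⟩ := h.exists_adj 0 hn
  obtain rfl : j = 1 := by omega
  exact hj

theorem add_two_mem (h : IsPathMinTD n s) {i : ℕ} (hi : i + 1 < n) (his : i ∉ s) :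
    i + 2 ∈ s := by
  obtain ⟨j, hj, hadj⟩ := h.exists_adj (i + 1) hi
  obtain rfl | rfl : j = i + 2 ∨ j = i := by omega
  exacts [hj, absurd hj his]

/-- If the left neighbour of `v ∈ s` is absent or has another neighbour in `s`, the private
neighbour of `v` is `v + 1`. -/
theorem add_one_lt_and_add_two_not_mem (h : IsPathMinTD n s) {v : ℕ} (hv : v ∈ s)
    (hleft : ∀ w, w + 1 = v → ∃ u ∈ s, u + 1 = w) : v + 1 < n ∧ v + 2 ∉ s := by
  obtain ⟨w, hw, hvw, hpriv⟩ := h.exists_private v hv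
  rcases hvw with rfl | rfl
  · exact ⟨hw, fun h2 => absurd (hpriv _ h2 (Or.inr rfl)) (by omega)⟩
  · obtain ⟨u, hu, rfl⟩ := hleft w rfl
    exact absurd (hpriv u hu (Or.inl rfl)) (by omega)

/-- The condition `k ∈ s ∨ k + 2 ∉ s` excludes that the cut-off vertex `k + 1` is the private
neighbour of `k + 2`. -/
theorem drop (h : IsPathMinTD n s) (k : ℕ) (hk1 : k + 1 ∉ s) (hk : k ∈ s ∨ k + 2 ∉ s) :
    IsPathMinTD (n - (k + 2)) ((k + 2 + ·) ⁻¹' s) where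
  lt_of_mem i hi := by
    have := h.lt_of_mem (k + 2 + i) hi
    omega
  exists_adj i hi := by
    obtain ⟨j, hj, hadj⟩ := h.exists_adj (k + 2 + i) (by omega)
    have hjk : j ≠ k + 1 := fun hj' => hk1 (hj' ▸ hj)
    refine ⟨j - (k + 2), ?_, by omega⟩
    simpa only [mem_preimage, show k + 2 + (j - (k + 2)) = j by omega] using hj
  exists_private v hv := by
    obtain ⟨w, hw, hvw, hpriv⟩ := h.exists_private (k + 2 + v) hv
    have hkw : k + 2 ≤ w := by
      by_contra hlt
      obtain rfl : v = 0 := by omega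
      rcases hk with hk | hk
      · exact absurd (hpriv k hk (by omega)) (by omega)
      · exact hk hv
    refine ⟨w - (k + 2), by omega, by omega, fun u hu hadj => ?_⟩
    have := hpriv (k + 2 + u) hu (by omega)
    omega

theorem ncard_le_of_zero_not_mem
    (ih : ∀ m < n, ∀ t : Set ℕ, IsPathMinTD m t →
      t.ncard ≤ 2 * ((m + 1) / 3) ∧ (0 ∉ t → t.ncard ≤ 2 * m / 3))
    (h : IsPathMinTD n s) (h0 : 0 ∉ s) : s.ncard ≤ 2 * n / 3 := by
  rcases Nat.eq_zero_or_pos n with rfl | hn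
  · simp [eq_empty_of_forall_notMem fun i hi => Nat.not_lt_zero _ (h.lt_of_mem i hi)]
  have h1 := h.one_mem hn
  have h2 : 2 ∈ s := h.add_two_mem (h.lt_of_mem 1 h1) h0
  have h2n := h.lt_of_mem 2 h2
  by_cases h3 : 3 ∈ s
  · obtain ⟨h4n, h5⟩ := h.add_one_lt_and_add_two_not_mem h3 fun _ hw => ⟨1, h1, by omega⟩
    by_cases h4 : 4 ∈ s
    · obtain ⟨h5n, h6⟩ := h.add_one_lt_and_add_two_not_mem h4 fun _ hw => ⟨2, h2, by omega⟩
      have htail : IsPathMinTD (n - 6) ((6 + ·) ⁻¹' s) := h.drop 4 h5 (Or.inr h6)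
      have := (ih _ (by omega) _ htail).2 h6
      have := ncard_le_add_ncard_preimage_add h.finite (a := 1) (b := 4) (m := 6)
        fun i hi _ => by
          have := ne_of_mem_of_not_mem hi h0
          have := ne_of_mem_of_not_mem hi h5
          omega
      omega
    · have htail : IsPathMinTD (n - 5) ((5 + ·) ⁻¹' s) := h.drop 3 h4 (Or.inr h5)
      have := (ih _ (by omega) _ htail).2 h5
      have := ncard_le_add_ncard_preimage_add h.finite (a := 1) (b := 3) (m := 5)
        fun i hi _ => by
          have := ne_of_mem_of_not_mem hi h0
          have := ne_of_mem_of_not_mem hi h4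
          omega
      omega
  · have htail : IsPathMinTD (n - 4) ((4 + ·) ⁻¹' s) := h.drop 2 h3 (Or.inl h2)
    have := (ih _ (by omega) _ htail).1
    have := ncard_le_add_ncard_preimage_add h.finite (a := 1) (b := 2) (m := 4)
      fun i hi _ => by
        have := ne_of_mem_of_not_mem hi h0
        have := ne_of_mem_of_not_mem hi h3
        omega
    omega

theorem ncard_le_of_zero_mem
    (ih : ∀ m < n, ∀ t : Set ℕ, IsPathMinTD m t → t.ncard ≤ 2 * ((m + 1) / 3))
    (h : IsPathMinTD n s) (h0 : 0 ∈ s) : s.ncard ≤ 2 * ((n + 1) / 3) := by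
  obtain ⟨h1n, h2⟩ := h.add_one_lt_and_add_two_not_mem h0 fun _ hw => by omega
  have h1 := h.one_mem (by omega)
  have htail : IsPathMinTD (n - 3) ((3 + ·) ⁻¹' s) := h.drop 1 h2 (Or.inl h1)
  have := ih _ (by omega) _ htail
  have := ncard_le_add_ncard_preimage_add h.finite (a := 0) (b := 1) (m := 3)
    fun i hi _ => by
      have := ne_of_mem_of_not_mem hi h2
      omega
  omega

theorem ncard_le (h : IsPathMinTD n s) :
    s.ncard ≤ 2 * ((n + 1) / 3) ∧ (0 ∉ s → s.ncard ≤ 2 * n / 3) := by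
  induction n using Nat.strong_induction_on generalizing s with
  | _ n ih =>
    have hzero := h.ncard_le_of_zero_not_mem fun m hm t ht => ih m hm ht
    refine ⟨?_, hzero⟩
    by_cases h0 : 0 ∈ s
    · exact h.ncard_le_of_zero_mem (fun m hm t ht => (ih m hm ht).1) h0
    · exact (hzero h0).trans (by omega)

end IsPathMinTD

theorem isPathMinTD_periodic {n d : ℕ} (hd : d ≤ 1) (hdn : d < n) (hn : (n - d) % 3 ≠ 1) :
    IsPathMinTD n {i | d ≤ i ∧ i < n ∧ (i - d) % 3 ≠ 2} where
  lt_of_mem _ hi := hi.2.1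
  exists_adj i hi := by
    by_cases hright : i < d ∨ (i - d) % 3 = 0
    · exact ⟨i + 1, by simp only [mem_ofPred_eq]; omega, Or.inl rfl⟩
    · exact ⟨i - 1, by simp only [mem_ofPred_eq]; omega, Or.inr (by omega)⟩
  exists_private v hv := by
    simp only [mem_ofPred_eq] at hv
    by_cases hright : (v - d) % 3 = 0
    · refine ⟨v + 1, by omega, Or.inl rfl, fun u hu hadj => ?_⟩
      simp only [mem_ofPred_eq] at hu
      omega
    · refine ⟨v - 1, by omega, Or.inr (by omega), fun u hu hadj => ?_⟩
      simp only [mem_ofPred_eq] at hu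
      omega

theorem ncard_periodic (n d : ℕ) :
    {i | d ≤ i ∧ i < n ∧ (i - d) % 3 ≠ 2}.ncard = (2 * (n - d) + 2) / 3 := by
  have hinj : (fun j => d + 3 * (j / 2) + j % 2).Injective := fun a b hab => by
    simp only at hab
    omega
  have himage : {i | d ≤ i ∧ i < n ∧ (i - d) % 3 ≠ 2} =
      (fun j => d + 3 * (j / 2) + j % 2) '' Iio ((2 * (n - d) + 2) / 3) := by
    ext i
    simp only [mem_ofPred_eq, mem_image, mem_Iio]
    constructor
    · intro hi
      exact ⟨2 * ((i - d) / 3) + (i - d) % 3, by omega, by omega⟩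
    · rintro ⟨j, hj, rfl⟩
      omega
  rw [himage, ncard_image_of_injective _ hinj, ncard_Iio_nat]

theorem exists_isPathMinTD_ncard_eq {n : ℕ} (hn : 2 ≤ n) :
    ∃ s, IsPathMinTD n s ∧ s.ncard = 2 * ((n + 1) / 3) := by
  obtain ⟨d, hd, hdn⟩ : ∃ d ≤ 1, (n - d) % 3 ≠ 1 :=
    ⟨if n % 3 = 1 then 1 else 0, by split_ifs <;> omega, by split_ifs <;> omega⟩
  exact ⟨_, isPathMinTD_periodic hd (by omega) hdn, by rw [ncard_periodic]; omega⟩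

theorem card_le_of_isMinTDSet_pathGraph {n : ℕ} {S : Finset (Fin n)}
    (hS : isMinTDSet (SimpleGraph.pathGraph n) ↑S) : S.card ≤ 2 * ((n + 1) / 3) := by
  rw [← ncard_coe_finset, ← ncard_image_of_injective _ Fin.val_injective]
  exact (isMinTDSet_pathGraph_iff.1 hS).ncard_le.1

theorem exists_isMinTDSet_pathGraph_card_eq {n : ℕ} (hn : 2 ≤ n) :
    ∃ S : Finset (Fin n), isMinTDSet (SimpleGraph.pathGraph n) ↑S ∧ S.card = 2 * ((n + 1) / 3) := by
  classical
  obtain ⟨s, hs, hcard⟩ := exists_isPathMinTD_ncard_eq hn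
  have himage : Fin.val '' (Fin.val ⁻¹' s) = s :=
    image_preimage_eq_of_subset fun i hi => ⟨⟨i, hs.lt_of_mem i hi⟩, rfl⟩
  refine ⟨(Fin.val ⁻¹' s).toFinset, ?_, ?_⟩
  · rwa [coe_toFinset, isMinTDSet_pathGraph_iff, himage]
  · rw [← ncard_coe_finset, coe_toFinset, ← ncard_image_of_injective _ Fin.val_injective, himage,
      hcard]

/-- For `n ≥ 2`, `Γ_t(P_n) = 2⌊(n+1)/3⌋`. -/
theorem stmt1 (n : ℕ) (hn : 2 ≤ n) :
    upperTD (SimpleGraph.pathGraph n) = 2 * ((n + 1) / 3) := by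
  refine IsGreatest.csSup_eq ⟨exists_isMinTDSet_pathGraph_card_eq hn, ?_⟩
  rintro _ ⟨S, hS, rfl⟩
  exact card_le_of_isMinTDSet_pathGraph hS
end

section
/- If G is an isolate-free graph, then every minimal total dominating set of G is an open-open irredundant set; consequently Γ_t(G) ≤ OOIR(G). -/
variable {V : Type*}

/-! Removing `v` from a minimal total dominating set `S` leaves some vertex `w` undominated;
since `S` dominates `w`, the only neighbor of `w` in `S` is `v`, so `w` is a private
open neighbor of `v` with respect to `S`. -/

theorem isMinTDSet.isOOIrr {G : SimpleGraph V} {S : Set V} (hS : isMinTDSet G S) :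
    isOOIrr G S := by
  intro v hv
  have hNotTD : ¬ isTDSet G (S \ {v}) := hS.2 _ (Set.sdiff_singleton_ssubset.mpr hv)
  simp only [isTDSet, not_forall, not_exists, not_and] at hNotTD
  obtain ⟨w, hw⟩ := hNotTD
  have hPrivate : ∀ u ∈ S, u ≠ v → ¬ G.Adj u w := fun u hu huv huw =>
    hw u ⟨hu, huv⟩ huw.symm
  obtain ⟨u, hu, hwu⟩ := hS.1 w
  obtain rfl : u = v := by_contra fun huv => hPrivate u hu huv hwu.symm
  exact ⟨w, hwu.symm, hPrivate⟩

theorem sSup_card_le_sSup_card [Fintype V] {P Q : Finset V → Prop} (hPQ : ∀ S, P S → Q S) :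
    sSup {n | ∃ S : Finset V, P S ∧ S.card = n} ≤ sSup {n | ∃ S : Finset V, Q S ∧ S.card = n} := by
  refine csSup_le_csSup' ⟨Fintype.card V, ?_⟩ ?_
  · rintro _ ⟨S, -, rfl⟩
    exact S.card_le_univ
  · rintro _ ⟨S, hS, rfl⟩
    exact ⟨S, hPQ S hS, rfl⟩

theorem stmt2_general [Fintype V] (G : SimpleGraph V) :
    (∀ S : Set V, isMinTDSet G S → isOOIrr G S) ∧ upperTD G ≤ ooirNum G :=
  ⟨fun _ hS => hS.isOOIrr, sSup_card_le_sSup_card fun _ hS => hS.isOOIrr⟩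

/-- In an isolate-free graph every minimal TD-set is open-open irredundant;
consequently `Γ_t(G) ≤ OOIR(G)`. -/
theorem stmt2 [Fintype V] (G : SimpleGraph V) (hG : ∀ v : V, ∃ w, G.Adj v w) :
    (∀ S : Set V, isMinTDSet G S → isOOIrr G S) ∧ upperTD G ≤ ooirNum G :=
  stmt2_general G
end

section
/- If G is an isolate-free graph and M is an induced matching in G, then the set of endpoints of the edges of M is an open-open irredundant set; consequently 2·ν_I(G) ≤ OOIR(G), where ν_I(G) is the induced matching number. -/
variable {V : Type*}

/-! For an edge `vw` of an induced matching, `w` is a private neighbour of `v`: another endpoint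
adjacent to `w` would join two distinct matching edges. A maximum induced matching has
`2 ν_I(G)` endpoints, all distinct, so they form an open-open irredundant set of that size. -/

namespace isInducedMatching

variable {G : SimpleGraph V}

theorem isOOIrr_endpoints {M : Set (Sym2 V)} (hM : isInducedMatching G M) :
    isOOIrr G {v | ∃ e ∈ M, v ∈ e} := by
  rintro v ⟨e, he, hve⟩
  obtain ⟨w, rfl⟩ := Sym2.mem_iff_exists.mp hve
  refine ⟨w, hM.1 _ he, ?_⟩
  rintro u ⟨f, hf, huf⟩ huv hadj
  by_cases hfe : f = s(v, w)
  · subst hfe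
    obtain rfl : u = w := (Sym2.mem_iff.mp huf).resolve_left huv
    exact G.loopless.irrefl u hadj
  · exact (hM.2 _ he _ hf (Ne.symm hfe) w (Sym2.mem_mk_right v w) u huf).2 hadj.symm

theorem card_biUnion_toFinset [DecidableEq V] {M : Finset (Sym2 V)}
    (hM : isInducedMatching G ↑M) : (M.biUnion Sym2.toFinset).card = 2 * M.card := by
  rw [Finset.card_biUnion, Finset.sum_const_nat, mul_comm]
  · intro e he
    exact Sym2.card_toFinset_of_not_isDiag e (G.not_isDiag_of_mem_edgeSet (hM.1 e he))
  · intro e he f hf hef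
    refine Finset.disjoint_left.mpr fun u hue huf => ?_
    exact (hM.2 e he f hf hef u (Sym2.mem_toFinset.mp hue) u (Sym2.mem_toFinset.mp huf)).1 rfl

end isInducedMatching

theorem exists_isInducedMatching_card_eq_inducedMatchingNum [Fintype V] (G : SimpleGraph V) :
    ∃ M : Finset (Sym2 V), isInducedMatching G ↑M ∧ M.card = inducedMatchingNum G := by
  classical
  have hempty : isInducedMatching G ↑(∅ : Finset (Sym2 V)) := by
    simp [isInducedMatching]
  exact Nat.sSup_mem (s := {n | ∃ M : Finset (Sym2 V), isInducedMatching G ↑M ∧ M.card = n})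
    ⟨0, ∅, hempty, rfl⟩
    ⟨Fintype.card (Sym2 V), by rintro n ⟨M, -, rfl⟩; exact M.card_le_univ⟩

theorem card_le_ooirNum [Fintype V] {G : SimpleGraph V} {S : Finset V} (hS : isOOIrr G ↑S) :
    S.card ≤ ooirNum G :=
  le_csSup ⟨Fintype.card V, by rintro n ⟨T, -, rfl⟩; exact T.card_le_univ⟩ ⟨S, hS, rfl⟩

theorem stmt3_general [Fintype V] (G : SimpleGraph V)
    (M : Set (Sym2 V)) (hM : isInducedMatching G M) :
    isOOIrr G {v | ∃ e ∈ M, v ∈ e} ∧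
    2 * inducedMatchingNum G ≤ ooirNum G := by
  classical
  refine ⟨hM.isOOIrr_endpoints, ?_⟩
  obtain ⟨N, hN, hcard⟩ := exists_isInducedMatching_card_eq_inducedMatchingNum G
  have hendpoints : ((N.biUnion Sym2.toFinset : Finset V) : Set V) = {v | ∃ e ∈ ↑N, v ∈ e} := by
    ext v
    simp [Sym2.mem_toFinset]
  calc 2 * inducedMatchingNum G = (N.biUnion Sym2.toFinset).card := by
        rw [hN.card_biUnion_toFinset, hcard]
    _ ≤ ooirNum G := card_le_ooirNum (hendpoints ▸ hN.isOOIrr_endpoints)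

/-- The endpoint set of an induced matching is open-open irredundant;
consequently `2·ν_I(G) ≤ OOIR(G)`. -/
theorem stmt3 [Fintype V] (G : SimpleGraph V) (hG : ∀ v : V, ∃ w, G.Adj v w)
    (M : Set (Sym2 V)) (hM : isInducedMatching G M) :
    isOOIrr G {v | ∃ e ∈ M, v ∈ e} ∧
    2 * inducedMatchingNum G ≤ ooirNum G :=
  stmt3_general G M hM
end

section
/- Let k ≥ 2 and let G be the k-th power of the cycle C_{2k+3}. Then no minimal total dominating set of G contains two vertices that are adjacent on the original cycle. -/
/-! In `C_{2k+3}^k` the only vertices not adjacent to `v` (other than `v`) are `v + (k+1)` and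
`v + (k+2)`. If `i` and `i + 1` both lie in a minimal total dominating set `S`, their private
neighbours are forced into `{i + 1, i + (k+3)}` and `{i, i + (k+1)}`. The vertex `i + (k+2)` is
dominated by neither `i` nor `i + 1`, hence by some other `u ∈ S`, which must be non-adjacent to
both private neighbours; for `k ≥ 2` no such `u` exists. -/

variable {V : Type*}

instance (k : ℕ) : NeZero (2 * k + 3) := ⟨by omega⟩

/-- The `k`-th power of the cycle `C_{2k+3}`, on vertex set `ZMod (2k+3)`:
`i` and `j` are adjacent iff they are distinct and at cyclic distance at most `k`. -/
def cyclePower (k : ℕ) : SimpleGraph (ZMod (2 * k + 3)) :=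
  SimpleGraph.fromRel (fun i j => ∃ d : ℕ, d ≤ k ∧ j = i + (d : ZMod (2 * k + 3)))

namespace ZMod

lemma natCast_eq_natCast_iff_of_lt_two_mul {n a c : ℕ} (ha : a < n) (hc : c < 2 * n) :
    (a : ZMod n) = c ↔ a = c ∨ a + n = c := by
  rw [natCast_eq_natCast_iff', Nat.mod_eq_of_lt ha]
  rcases lt_or_ge c n with h | h
  · rw [Nat.mod_eq_of_lt h]; omega
  · rw [Nat.mod_eq_sub_mod h, Nat.mod_eq_of_lt (by omega)]; omega

section Offsets

variable {n : ℕ} (i : ZMod n)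

lemma add_natCast_inj {a b : ℕ} (ha : a < n) (hb : b < n) : i + a = i + b ↔ a = b := by
  rw [add_right_inj, natCast_eq_natCast_iff_of_lt_two_mul ha (by omega)]
  omega

lemma exists_add_natCast_eq [NeZero n] (x : ZMod n) : ∃ m < n, i + m = x :=
  ⟨(x - i).val, val_lt _, by rw [natCast_zmod_val, add_sub_cancel]⟩

lemma exists_le_add_natCast_eq_iff {k a b : ℕ} (ha : a < n) (hb : b < n) (hk : k < n) :
    (∃ d : ℕ, d ≤ k ∧ i + b = i + a + d) ↔ a ≤ b ∧ b ≤ a + k ∨ b + n ≤ a + k := by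
  simp_rw [add_assoc, add_right_inj, ← Nat.cast_add]
  constructor
  · rintro ⟨d, hd, h⟩
    rw [natCast_eq_natCast_iff_of_lt_two_mul hb (by omega)] at h
    omega
  · rintro (h | h)
    · exact ⟨b - a, by omega, by rw [natCast_eq_natCast_iff_of_lt_two_mul hb (by omega)]; omega⟩
    · exact ⟨b + n - a, by omega, by rw [natCast_eq_natCast_iff_of_lt_two_mul hb (by omega)]; omega⟩

end Offsets

end ZMod

lemma cyclePower_adj_add_natCast_iff {k a b : ℕ} (i : ZMod (2 * k + 3)) (ha : a < 2 * k + 3)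
    (hb : b < 2 * k + 3) :
    (cyclePower k).Adj (i + a) (i + b) ↔
      a ≠ b ∧ (a ≤ b + k ∧ b ≤ a + k ∨ a + (2 * k + 3) ≤ b + k ∨ b + (2 * k + 3) ≤ a + k) := by
  rw [cyclePower, SimpleGraph.fromRel_adj, Ne, ZMod.add_natCast_inj i ha hb,
    ZMod.exists_le_add_natCast_eq_iff i ha hb (by omega),
    ZMod.exists_le_add_natCast_eq_iff i hb ha (by omega)]
  omega

lemma isMinTDSet.exists_private_neighbor {G : SimpleGraph V} {S : Set V} (hS : isMinTDSet G S)
    {v : V} (hv : v ∈ S) : ∃ w, G.Adj v w ∧ ∀ u ∈ S, u ≠ v → ¬ G.Adj u w := by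
  have hnot := hS.2 _ (Set.sdiff_singleton_ssubset.mpr hv)
  simp only [isTDSet, not_forall, not_exists, not_and] at hnot
  obtain ⟨w, hw⟩ := hnot
  obtain ⟨u, hu, huw⟩ := hS.1 w
  obtain rfl : u = v := by_contra fun h => hw u ⟨hu, h⟩ huw
  exact ⟨w, huw.symm, fun u' hu' hne h => hw u' ⟨hu', hne⟩ h.symm⟩

/-- No minimal TD-set of `C_{2k+3}^k` contains two consecutive vertices of the cycle. -/
theorem stmt5 (k : ℕ) (hk : 2 ≤ k) (S : Set (ZMod (2 * k + 3)))
    (hS : isMinTDSet (cyclePower k) S) (i : ZMod (2 * k + 3)) :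
    ¬ (i ∈ S ∧ i + 1 ∈ S) := by
  rintro ⟨hi, hi1⟩
  -- Write every vertex as `i + m` with `m < 2k+3`: all adjacency facts become linear in the offsets.
  replace hi : i + ((0 : ℕ) : ZMod (2 * k + 3)) ∈ S := by simpa using hi
  replace hi1 : i + ((1 : ℕ) : ZMod (2 * k + 3)) ∈ S := by simpa using hi1
  obtain ⟨wa, hwa, hwa_priv⟩ := hS.exists_private_neighbor hi
  obtain ⟨wb, hwb, hwb_priv⟩ := hS.exists_private_neighbor hi1
  obtain ⟨u, hu, hux⟩ := hS.1 (i + (k + 2 : ℕ))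
  obtain ⟨a, ha, rfl⟩ := ZMod.exists_add_natCast_eq i wa
  obtain ⟨b, hb, rfl⟩ := ZMod.exists_add_natCast_eq i wb
  obtain ⟨c, hc, rfl⟩ := ZMod.exists_add_natCast_eq i u
  have adj {x y : ℕ} (hx : x < 2 * k + 3) (hy : y < 2 * k + 3) :=
    cyclePower_adj_add_natCast_iff i hx hy
  have ne {x y : ℕ} (hx : x < 2 * k + 3) (hy : y < 2 * k + 3) (h : x ≠ y) :
      i + (x : ZMod (2 * k + 3)) ≠ i + y :=
    mt (ZMod.add_natCast_inj i hx hy).1 h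
  have hwa0 := (adj (by omega) ha).1 hwa
  have hwa1 := mt (adj (by omega) ha).2 (hwa_priv _ hi1 (ne (by omega) (by omega) one_ne_zero))
  have hwb1 := (adj (by omega) hb).1 hwb
  have hwb0 := mt (adj (by omega) hb).2 (hwb_priv _ hi (ne (by omega) (by omega) zero_ne_one))
  have hux' := (adj (by omega) hc).1 hux
  have hua (h : c ≠ 0) := mt (adj hc ha).2 (hwa_priv _ hu (ne hc (by omega) h))
  have hub (h : c ≠ 1) := mt (adj hc hb).2 (hwb_priv _ hu (ne hc (by omega) h))
  omega
end

section
/- For k ≥ 2, the upper total domination number of the k-th power of the cycle C_{2k+3} equals 2. -/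
variable {V : Type*}

/-!
Vertex `i` of `C_{2k+3}^k` is adjacent to everything except `i + k + 1` and `i + k + 2`, so any
two vertices at cyclic distance between `2` and `k` already form a total dominating set, and a
two-element total dominating set is minimal. This gives `Γ_t ≥ 2` via `{0, 2}`.

Conversely, in a minimal total dominating set `S` with at least three vertices no two vertices
are at cyclic distance in `[2, k]`, so all differences lie in `{0, ±1, k + 1, k + 2}`. Some
`a, a + 1` lie in `S`; a third vertex must then be `a + k + 2`, and its neighbour in `S`
(`a + k + 1` or `a + k + 3`) is at distance `k` from `a + 1` or from `a`.
-/

namespace ZMod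

variable {n : ℕ} [NeZero n]

lemma val_add_eq_or (a b : ZMod n) :
    (a + b).val = a.val + b.val ∨ (a + b).val + n = a.val + b.val := by
  rcases lt_or_ge (a.val + b.val) n with h | h
  · exact .inl (val_add_of_lt h)
  · exact .inr (by rw [val_add_of_le h]; omega)

lemma val_sub_eq_or (a b c : ZMod n) :
    (c - a).val = (c - b).val + (b - a).val ∨ (c - a).val + n = (c - b).val + (b - a).val := by
  simpa using val_add_eq_or (c - b) (b - a)

lemma val_sub_add_val_sub_eq_or (a b : ZMod n) :
    (b - a).val + (a - b).val = 0 ∨ (b - a).val + (a - b).val = n := by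
  have := val_sub_eq_or a b a
  simp only [sub_self, val_zero] at this
  omega

omit [NeZero n] in
lemma val_sub_eq_zero_iff {a b : ZMod n} : (b - a).val = 0 ↔ b = a := by
  rw [val_eq_zero, sub_eq_zero]

lemma exists_le_eq_add_iff {k : ℕ} (hk : k < n) (i j : ZMod n) :
    (∃ d : ℕ, d ≤ k ∧ j = i + d) ↔ (j - i).val ≤ k := by
  constructor
  · rintro ⟨d, hd, rfl⟩
    rw [add_sub_cancel_left, val_cast_of_lt (by omega)]
    exact hd
  · exact fun h => ⟨(j - i).val, h, by rw [natCast_zmod_val, add_sub_cancel]⟩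

end ZMod

section TotalDomination

variable {V : Type*} {G : SimpleGraph V}

lemma isTDSet.nontrivial [Nonempty V] {S : Set V} (hS : isTDSet G S) : S.Nontrivial := by
  obtain ⟨u, hu, -⟩ := hS (Classical.arbitrary V)
  obtain ⟨w, hw, huw⟩ := hS u
  exact ⟨u, hu, w, hw, huw.ne⟩

lemma isMinTDSet_pair [Nonempty V] {a b : V} (h : isTDSet G {a, b}) :
    isMinTDSet G {a, b} := by
  refine ⟨h, fun T hT hTd => ?_⟩
  rcases Set.subset_pair_iff_eq.1 hT.subset with rfl | rfl | rfl | rfl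
  · exact Set.not_nontrivial_empty hTd.nontrivial
  · exact Set.not_nontrivial_singleton hTd.nontrivial
  · exact Set.not_nontrivial_singleton hTd.nontrivial
  · exact hT.ne rfl

lemma isMinTDSet.eq_of_subset {S T : Set V} (hS : isMinTDSet G S) (hTS : T ⊆ S)
    (hT : isTDSet G T) : T = S := by
  by_contra hne
  exact hS.2 T (hTS.ssubset_of_ne hne) hT

lemma isMinTDSet.card_le_two_of_pair [DecidableEq V] {S : Finset V} {a b : V}
    (hS : isMinTDSet G ↑S) (ha : a ∈ S) (hb : b ∈ S) (hab : isTDSet G {a, b}) :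
    S.card ≤ 2 := by
  have hpair : (({a, b} : Finset V) : Set V) = ↑S := by
    rw [Finset.coe_pair]
    exact hS.eq_of_subset (Set.pair_subset ha hb) hab
  rw [← Finset.coe_inj.1 hpair]
  exact Finset.card_le_two

end TotalDomination

namespace cyclePower

variable {k : ℕ}

lemma adj_iff {i j : ZMod (2 * k + 3)} :
    (cyclePower k).Adj i j ↔ (j - i).val ≠ 0 ∧ (j - i).val ≠ k + 1 ∧ (j - i).val ≠ k + 2 := by
  rw [cyclePower, SimpleGraph.fromRel_adj, ZMod.exists_le_eq_add_iff (by omega),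
    ZMod.exists_le_eq_add_iff (by omega), Ne, ← ZMod.val_sub_eq_zero_iff]
  have := ZMod.val_lt (i - j)
  have := ZMod.val_lt (j - i)
  have := ZMod.val_sub_add_val_sub_eq_or i j
  omega

lemma isTDSet_pair {a b : ZMod (2 * k + 3)} (h2 : 2 ≤ (b - a).val) (hle : (b - a).val ≤ k) :
    isTDSet (cyclePower k) {a, b} := by
  intro v
  by_cases hva : (cyclePower k).Adj v a
  · exact ⟨a, by simp, hva⟩
  refine ⟨b, by simp, ?_⟩
  rw [adj_iff] at hva ⊢
  have := ZMod.val_lt (b - v)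
  have := ZMod.val_sub_eq_or v a b
  omega

lemma val_sub_of_isMinTDSet {S : Finset (ZMod (2 * k + 3))}
    (hS : isMinTDSet (cyclePower k) ↑S) (hS3 : 2 < S.card) {a b : ZMod (2 * k + 3)}
    (ha : a ∈ S) (hb : b ∈ S) :
    (b - a).val ≤ 1 ∨ (b - a).val = k + 1 ∨ (b - a).val = k + 2 ∨ 2 * k + 2 ≤ (b - a).val := by
  have := ZMod.val_sub_add_val_sub_eq_or a b
  by_contra! h
  rcases le_or_gt (b - a).val k with hba | hba
  · exact absurd (hS.card_le_two_of_pair ha hb (isTDSet_pair (by omega) hba)) (by omega)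
  · exact absurd (hS.card_le_two_of_pair hb ha (isTDSet_pair (by omega) (by omega))) (by omega)

lemma exists_val_sub_eq_one_of_isMinTDSet {S : Finset (ZMod (2 * k + 3))}
    (hS : isMinTDSet (cyclePower k) ↑S) (hS3 : 2 < S.card) :
    ∃ a ∈ S, ∃ b ∈ S, (b - a).val = 1 := by
  obtain ⟨a, ha⟩ := Finset.card_pos.1 (by omega : 0 < S.card)
  obtain ⟨b, hb, hadj⟩ := hS.1 a
  rw [adj_iff] at hadj
  have := val_sub_of_isMinTDSet hS hS3 ha hb
  have := ZMod.val_sub_add_val_sub_eq_or a b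
  have := ZMod.val_lt (b - a)
  have := ZMod.val_lt (a - b)
  rcases (by omega : (b - a).val = 1 ∨ (a - b).val = 1) with h | h
  exacts [⟨a, ha, b, hb, h⟩, ⟨b, hb, a, ha, h⟩]

lemma card_le_two_of_isMinTDSet (hk : 2 ≤ k) {S : Finset (ZMod (2 * k + 3))}
    (hS : isMinTDSet (cyclePower k) ↑S) : S.card ≤ 2 := by
  by_contra! hS3
  have far {a b} (ha : a ∈ S) (hb : b ∈ S) := val_sub_of_isMinTDSet hS hS3 ha hb
  have bound (a b : ZMod (2 * k + 3)) := ZMod.val_lt (b - a)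
  obtain ⟨a, ha, b, hb, hab⟩ := exists_val_sub_eq_one_of_isMinTDSet hS hS3
  obtain ⟨c, hc, hcab⟩ := Finset.exists_mem_notMem_of_card_lt_card
    (Finset.card_le_two.trans_lt hS3 : ({a, b} : Finset _).card < S.card)
  simp only [Finset.mem_insert, Finset.mem_singleton, not_or] at hcab
  have hca : (c - a).val = k + 2 ∧ (c - b).val = k + 1 := by
    have := ZMod.val_sub_eq_or a b c
    have := far ha hc
    have := far hb hc
    have := mt ZMod.val_sub_eq_zero_iff.1 hcab.1
    have := mt ZMod.val_sub_eq_zero_iff.1 hcab.2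
    have := bound a c
    have := bound b c
    constructor <;> omega
  obtain ⟨d, hd, hcd⟩ := hS.1 c
  rw [adj_iff] at hcd
  have := ZMod.val_sub_eq_or a c d
  have := ZMod.val_sub_eq_or b c d
  have := far hc hd
  have := far ha hd
  have := far hb hd
  have := bound a d
  have := bound b d
  have := bound c d
  omega

end cyclePower

/-- For `k ≥ 2`, `Γ_t(C_{2k+3}^k) = 2`. -/
theorem stmt6 (k : ℕ) (hk : 2 ≤ k) :
    upperTD (cyclePower k) = 2 := by
  have h2 : ((2 : ZMod (2 * k + 3)) - 0).val = 2 := by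
    rw [sub_zero, ZMod.val_ofNat_of_lt (by omega : 2 < 2 * k + 3)]
  refine IsGreatest.csSup_eq ⟨⟨{0, 2}, ?_, ?_⟩, ?_⟩
  · rw [Finset.coe_pair]
    exact isMinTDSet_pair (cyclePower.isTDSet_pair h2.ge (h2.trans_le hk))
  · refine Finset.card_pair fun h => ?_
    rw [← h, sub_self, ZMod.val_zero] at h2
    omega
  · rintro n ⟨S, hS, rfl⟩
    exact cyclePower.card_le_two_of_isMinTDSet hk hS
end

section
/- Let T be a nontrivial tree with at least two support vertices in which every vertex is a leaf or a support vertex. Then the set of support vertices of T is the unique minimal total dominating set of T; in particular Γ_t(T) equals the number of support vertices of T. -/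
variable {V : Type*}

/-!
A leaf forces its unique neighbour into every total dominating set, so every TD-set contains
the support vertices. Conversely the support vertices already form a TD-set: a vertex with no
support neighbour would, since every vertex is a leaf or a support vertex, be the centre of a
star that is the whole (connected) graph, and a star has only one support vertex. Hence the set
of support vertices is the least TD-set, and so the only minimal one.
-/

namespace SimpleGraph

variable {G : SimpleGraph V}

def supportVertices (G : SimpleGraph V) [G.LocallyFinite] : Set V :=
  {v | ∃ u, G.Adj v u ∧ G.degree u = 1}

section LocallyFinite

variable [G.LocallyFinite]

lemma eq_of_adj_of_degree_eq_one {u a b : V} (hu : G.degree u = 1) (ha : G.Adj u a)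
    (hb : G.Adj u b) : a = b :=
  (degree_eq_one_iff_existsUnique_adj.mp hu).unique ha hb

lemma supportVertices_subset_of_isTDSet {S : Set V} (hS : isTDSet G S) :
    G.supportVertices ⊆ S := by
  rintro a ⟨u, hau, hu⟩
  obtain ⟨w, hwS, huw⟩ := hS u
  rwa [eq_of_adj_of_degree_eq_one hu huw hau.symm] at hwS

lemma eq_or_adj_of_reachable_of_forall_adj_degree_eq_one {v b : V}
    (hleaf : ∀ x, G.Adj v x → G.degree x = 1) (hvb : G.Reachable v b) :
    b = v ∨ G.Adj v b := by
  obtain ⟨p⟩ := hvb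
  suffices ∀ {a b : V}, G.Walk a b → (a = v ∨ G.Adj v a) → b = v ∨ G.Adj v b from
    this p (Or.inl rfl)
  intro a b p
  induction p with
  | nil => exact id
  | cons hay _ ih =>
    rintro (rfl | hva)
    · exact ih (Or.inr hay)
    · exact ih (Or.inl (eq_of_adj_of_degree_eq_one (hleaf _ hva) hay hva.symm))

lemma eq_of_mem_supportVertices_of_forall_adj_degree_eq_one (hG : G.Connected) {v c : V}
    (hv : G.degree v ≠ 1) (hleaf : ∀ x, G.Adj v x → G.degree x = 1)
    (hc : c ∈ G.supportVertices) : c = v := by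
  obtain ⟨u, hcu, hu⟩ := hc
  refine (eq_or_adj_of_reachable_of_forall_adj_degree_eq_one hleaf (hG v c)).resolve_right
    fun hvc => hv ?_
  rwa [← eq_of_adj_of_degree_eq_one (hleaf c hvc) hcu hvc.symm]

lemma isTDSet_supportVertices (hG : G.Connected)
    (hall : ∀ v, G.degree v = 1 ∨ v ∈ G.supportVertices)
    (htwo : ∃ a b, a ≠ b ∧ a ∈ G.supportVertices ∧ b ∈ G.supportVertices) :
    isTDSet G G.supportVertices := by
  intro v
  by_cases hv : G.degree v = 1
  · obtain ⟨w, hvw⟩ := (degree_eq_one_iff_existsUnique_adj.mp hv).exists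
    exact ⟨w, ⟨v, hvw.symm, hv⟩, hvw⟩
  by_contra! hnone
  have hleaf : ∀ x, G.Adj v x → G.degree x = 1 := fun x hvx =>
    (hall x).resolve_right fun hx => hnone x hx hvx
  obtain ⟨a, b, hab, ha, hb⟩ := htwo
  exact hab <| (eq_of_mem_supportVertices_of_forall_adj_degree_eq_one hG hv hleaf ha).trans
    (eq_of_mem_supportVertices_of_forall_adj_degree_eq_one hG hv hleaf hb).symm

end LocallyFinite

section LeastTDSet

variable {T : Set V} (hT : isTDSet G T) (hleast : ∀ S, isTDSet G S → T ⊆ S)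
include hT hleast

lemma isMinTDSet_of_forall_isTDSet_subset : isMinTDSet G T :=
  ⟨hT, fun _ hST hS => hST.not_subset (hleast _ hS)⟩

lemma eq_of_isMinTDSet_of_forall_isTDSet_subset {S : Set V} (hS : isMinTDSet G S) : S = T :=
  by_contra fun hne => hS.2 T ((hleast S hS.1).ssubset_of_ne (Ne.symm hne)) hT

lemma upperTD_eq_ncard_of_forall_isTDSet_subset [Fintype V] : upperTD G = T.ncard := by
  have hset : {n | ∃ S : Finset V, isMinTDSet G ↑S ∧ S.card = n} = {T.ncard} := by
    ext n
    constructor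
    · rintro ⟨S, hS, rfl⟩
      rw [Set.mem_singleton_iff, ← eq_of_isMinTDSet_of_forall_isTDSet_subset hT hleast hS,
        Set.ncard_coe_finset]
    · rintro rfl
      refine ⟨T.toFinite.toFinset, ?_, (Set.ncard_eq_toFinset_card T).symm⟩
      simpa using isMinTDSet_of_forall_isTDSet_subset hT hleast
  rw [upperTD, hset, csSup_singleton]

end LeastTDSet

end SimpleGraph

theorem stmt7_general [Fintype V] (G : SimpleGraph V) [DecidableRel G.Adj]
    (hT : G.IsTree)
    (hall : ∀ v : V, G.degree v = 1 ∨ ∃ u, G.Adj v u ∧ G.degree u = 1)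
    (h2supp : ∃ a b : V, a ≠ b ∧ (∃ u, G.Adj a u ∧ G.degree u = 1) ∧
      (∃ u, G.Adj b u ∧ G.degree u = 1)) :
    isMinTDSet G {v : V | ∃ u, G.Adj v u ∧ G.degree u = 1} ∧
    (∀ S : Set V, isMinTDSet G S → S = {v : V | ∃ u, G.Adj v u ∧ G.degree u = 1}) ∧
    upperTD G = Set.ncard {v : V | ∃ u, G.Adj v u ∧ G.degree u = 1} := by
  have hTD : isTDSet G G.supportVertices :=
    SimpleGraph.isTDSet_supportVertices hT.connected hall h2supp
  have hleast : ∀ S, isTDSet G S → G.supportVertices ⊆ S := fun _ =>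
    SimpleGraph.supportVertices_subset_of_isTDSet
  exact ⟨SimpleGraph.isMinTDSet_of_forall_isTDSet_subset hTD hleast,
    fun _ => SimpleGraph.eq_of_isMinTDSet_of_forall_isTDSet_subset hTD hleast,
    SimpleGraph.upperTD_eq_ncard_of_forall_isTDSet_subset hTD hleast⟩

/-- In a nontrivial tree with at least two support vertices in which every vertex is a
leaf or a support vertex, the set of support vertices is the unique minimal TD-set,
and `Γ_t(T)` equals the number of support vertices. -/
theorem stmt7 [Fintype V] (G : SimpleGraph V) [DecidableRel G.Adj]
    (hT : G.IsTree) (hord : 2 ≤ Fintype.card V)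
    (hall : ∀ v : V, G.degree v = 1 ∨ ∃ u, G.Adj v u ∧ G.degree u = 1)
    (h2supp : ∃ a b : V, a ≠ b ∧ (∃ u, G.Adj a u ∧ G.degree u = 1) ∧
      (∃ u, G.Adj b u ∧ G.degree u = 1)) :
    isMinTDSet G {v : V | ∃ u, G.Adj v u ∧ G.degree u = 1} ∧
    (∀ S : Set V, isMinTDSet G S → S = {v : V | ∃ u, G.Adj v u ∧ G.degree u = 1}) ∧
    upperTD G = Set.ncard {v : V | ∃ u, G.Adj v u ∧ G.degree u = 1} :=
  stmt7_general G hT hall h2supp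
end

section
/- For k ≥ 5, let F_k be the graph obtained from two disjoint copies of K_k with vertex sets {u_1,...,u_k} and {v_1,...,v_k} by adding the edges u_i v_i for i = 1,...,k−1. Then the open-open irredundance number of F_k equals k − 1. -/
variable {V : Type*}

/-- The graph `F_k`: two disjoint copies of `K_k` (the `inl` copy on `u_1,…,u_k` and the
`inr` copy on `v_1,…,v_k`) together with the edges `u_i v_i` for `1 ≤ i ≤ k-1`. -/
def Fgraph (k : ℕ) : SimpleGraph (Fin k ⊕ Fin k) :=
  SimpleGraph.fromRel (fun a b =>
    match a, b with
    | Sum.inl _, Sum.inl _ => True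
    | Sum.inr _, Sum.inr _ => True
    | Sum.inl i, Sum.inr j => i = j ∧ (i : ℕ) + 1 < k
    | Sum.inr _, Sum.inl _ => False)

/-!
The vertices `u_1, …, u_{k-1}` form an open-open irredundant set, `v_i` being the private
neighbour of `u_i`. Conversely, let `S` be open-open irredundant with at least three vertices in
one clique. Every vertex of that clique is adjacent to two of them, so each of them has its
private neighbour across a matching edge: none of them is `u_k` (resp. `v_k`), and a vertex
`v_j ∈ S` would be adjacent to the private neighbour `v_i` of each of them with `i ≠ j`, so `S`
misses the other clique. Hence `|S| ≤ k - 1`, and otherwise `|S| ≤ 2 + 2 ≤ k - 1`.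
-/

lemma isOOIrr.image {W : Type*} {G : SimpleGraph V} {H : SimpleGraph W} (f : G ≃g H)
    {S : Set V} (hS : isOOIrr G S) : isOOIrr H (f '' S) := by
  rintro _ ⟨v, hv, rfl⟩
  obtain ⟨w, hvw, hpriv⟩ := hS v hv
  refine ⟨f w, f.map_adj_iff.mpr hvw, ?_⟩
  rintro _ ⟨u, hu, rfl⟩ huv
  rw [f.map_adj_iff]
  exact hpriv u hu (ne_of_apply_ne f huv)

lemma ooirNum_eq_of_forall_card_le [Fintype V] {G : SimpleGraph V} {n : ℕ}
    (hex : ∃ S : Finset V, isOOIrr G ↑S ∧ S.card = n)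
    (hle : ∀ S : Finset V, isOOIrr G ↑S → S.card ≤ n) : ooirNum G = n :=
  IsGreatest.csSup_eq ⟨hex, by rintro _ ⟨S, hS, rfl⟩; exact hle S hS⟩

namespace Fgraph

variable {k : ℕ}

@[simp] lemma adj_inl_inl (i j : Fin k) : (Fgraph k).Adj (.inl i) (.inl j) ↔ i ≠ j := by
  simp [Fgraph]

@[simp] lemma adj_inr_inr (i j : Fin k) : (Fgraph k).Adj (.inr i) (.inr j) ↔ i ≠ j := by
  simp [Fgraph]

@[simp] lemma adj_inl_inr (i j : Fin k) :
    (Fgraph k).Adj (.inl i) (.inr j) ↔ i = j ∧ (i : ℕ) + 1 < k := by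
  simp [Fgraph]

@[simp] lemma adj_inr_inl (i j : Fin k) :
    (Fgraph k).Adj (.inr i) (.inl j) ↔ i = j ∧ (i : ℕ) + 1 < k := by
  rw [SimpleGraph.adj_comm, adj_inl_inr]
  grind

def swapIso : Fgraph k ≃g Fgraph k where
  toEquiv := Equiv.sumComm _ _
  map_rel_iff' := by
    rintro (a | a) (b | b) <;> simp

lemma exists_isOOIrr_card_eq (k : ℕ) :
    ∃ S : Finset (Fin k ⊕ Fin k), isOOIrr (Fgraph k) ↑S ∧ S.card = k - 1 := by
  refine ⟨Finset.univ.map ((Fin.castLEEmb (Nat.sub_le k 1)).trans .inl), ?_, by simp⟩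
  simp only [isOOIrr, Finset.coe_map, Finset.coe_univ, Set.image_univ, Set.forall_mem_range]
  intro i
  refine ⟨.inr (Fin.castLE (Nat.sub_le k 1) i),
    (adj_inl_inr _ _).mpr ⟨rfl, Nat.add_lt_of_lt_sub i.isLt⟩, fun j hji => ?_⟩
  simp_all

lemma add_one_lt_and_toRight_subset_of_inl_mem {S : Finset (Fin k ⊕ Fin k)}
    (hS : isOOIrr (Fgraph k) ↑S) (h3 : 3 ≤ S.toLeft.card) {i : Fin k} (hi : .inl i ∈ S) :
    (i : ℕ) + 1 < k ∧ S.toRight ⊆ {i} := by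
  obtain ⟨w, hiw, hpriv⟩ := hS _ hi
  rcases w with l | j
  · have : S.toLeft ⊆ {i, l} := by
      intro j hj
      by_contra hne
      simp only [Finset.mem_insert, Finset.mem_singleton, not_or] at hne
      exact hpriv (.inl j) (Finset.mem_toLeft.mp hj) (by simpa using hne.1) (by simpa using hne.2)
    have := (Finset.card_le_card this).trans Finset.card_le_two
    omega
  · obtain ⟨rfl, hik⟩ := (adj_inl_inr _ _).mp hiw
    refine ⟨hik, fun j hj => ?_⟩
    by_contra hne
    exact hpriv (.inr j) (Finset.mem_toRight.mp hj) (by simp)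
      ((adj_inr_inr j i).mpr (by simpa using hne))

lemma card_le_of_three_le_card_toLeft {S : Finset (Fin k ⊕ Fin k)}
    (hS : isOOIrr (Fgraph k) ↑S) (h3 : 3 ≤ S.toLeft.card) : S.card ≤ k - 1 := by
  have key {i : Fin k} (hi : i ∈ S.toLeft) :=
    add_one_lt_and_toRight_subset_of_inl_mem hS h3 (Finset.mem_toLeft.mp hi)
  obtain ⟨a, ha, b, hb, hab⟩ := Finset.one_lt_card.mp (by omega : 1 < S.toLeft.card)
  have hright : S.toRight = ∅ := by
    refine Finset.eq_empty_of_forall_notMem fun j hj => hab ?_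
    have hja := Finset.mem_singleton.mp ((key ha).2 hj)
    have hjb := Finset.mem_singleton.mp ((key hb).2 hj)
    rw [← hja, hjb]
  have hleft : S.toLeft.card ≤ k - 1 :=
    calc S.toLeft.card ≤ (Finset.range (k - 1)).card :=
          Finset.card_le_card_of_injOn Fin.val
            (fun i hi => Finset.mem_range.mpr (by have := (key hi).1; omega))
            Fin.val_injective.injOn
      _ = k - 1 := Finset.card_range _
  rw [← Finset.card_toLeft_add_card_toRight, hright, Finset.card_empty]
  omega

lemma card_le_of_isOOIrr (hk : 5 ≤ k) {S : Finset (Fin k ⊕ Fin k)}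
    (hS : isOOIrr (Fgraph k) ↑S) : S.card ≤ k - 1 := by
  by_cases hl : 3 ≤ S.toLeft.card
  · exact card_le_of_three_le_card_toLeft hS hl
  by_cases hr : 3 ≤ S.toRight.card
  · have hS' : isOOIrr (Fgraph k) ↑(S.map (Equiv.sumComm _ _).toEmbedding) := by
      rw [Finset.coe_map]
      exact hS.image swapIso
    simpa using card_le_of_three_le_card_toLeft hS' (by simpa using hr)
  rw [← Finset.card_toLeft_add_card_toRight]
  omega

end Fgraph

/-- For `k ≥ 5`, `OOIR(F_k) = k - 1`. -/
theorem stmt8 (k : ℕ) (hk : 5 ≤ k) : ooirNum (Fgraph k) = k - 1 :=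
  ooirNum_eq_of_forall_card_le (Fgraph.exists_isOOIrr_card_eq k)
    fun _ => Fgraph.card_le_of_isOOIrr hk
end

section
/- For k ≥ 1, the graph G_k built from k disjoint copies of P_4 ⊕ P_4 joined cyclically by edges w_{i,2}w_{i+1,1} satisfies OOIR(G_k) = 2k: every open-open irredundant set contains at most two vertices from each copy of P_4 ⊕ P_4, and this bound is achieved. -/
variable {V : Type*}

/-- The graph `G_k`: `k` disjoint copies of `P_4 ⊕ P_4` joined cyclically. The vertex
`(i, s, p)` is vertex number `p` of the path `Q_{i+1,s+1}`; within a copy the two paths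
are completely joined, and `w_{i,2} = (i,1,2)` is joined to `w_{i+1,1} = (i+1,0,2)`
cyclically. -/
def Gk (k : ℕ) : SimpleGraph (Fin k × Fin 2 × Fin 4) :=
  SimpleGraph.fromRel (fun a b =>
    (a.1 = b.1 ∧ a.2.1 ≠ b.2.1) ∨
    (a.1 = b.1 ∧ a.2.1 = b.2.1 ∧ (a.2.2 : ℕ) + 1 = (b.2.2 : ℕ)) ∨
    (a.2.1 = 1 ∧ a.2.2 = 2 ∧ b.2.1 = 0 ∧ b.2.2 = 2 ∧ (b.1 : ℕ) = ((a.1 : ℕ) + 1) % k))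

/-!
Only `w_{i,1}` and `w_{i,2}` have neighbours outside their copy `H_i`. Among any three vertices of
`P_4 ⊕ P_4` there is one, not a `w`, each of whose neighbours is adjacent to one of the other two
(a finite check); so in an open-open irredundant set it would have no private neighbour, and such a
set meets every copy at most twice. Conversely, the `2k` vertices `u_{i,s}` form an open-open
irredundant set, `u_{i,s}` having the private neighbour `u_{i,3-s}`.
-/

open Finset

theorem ooirNum_eq {G : SimpleGraph V} [Fintype V] {n : ℕ}
    (hS : ∃ S : Finset V, isOOIrr G ↑S ∧ #S = n)
    (hle : ∀ S : Finset V, isOOIrr G ↑S → #S ≤ n) : ooirNum G = n := by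
  refine le_antisymm (csSup_le ⟨n, hS⟩ ?_) (le_csSup ⟨n, ?_⟩ hS) <;>
    · rintro _ ⟨S, hS, rfl⟩
      exact hle S hS

/-- `P_4 ⊕ P_4`, labelled as a copy `H_i` of it is labelled in `Gk k`. -/
def joinP4 : SimpleGraph (Fin 2 × Fin 4) :=
  SimpleGraph.fromRel fun a b => a.1 ≠ b.1 ∨ (a.1 = b.1 ∧ (a.2 : ℕ) + 1 = b.2)

instance : DecidableRel joinP4.Adj := fun a b => by unfold joinP4; infer_instance

theorem joinP4_exists_covered_of_three {a b c : Fin 2 × Fin 4}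
    (hab : a ≠ b) (hac : a ≠ c) (hbc : b ≠ c) :
    ∃ v ∈ ({a, b, c} : Finset _), v.2 ≠ 2 ∧
      ∀ w, joinP4.Adj v w → ∃ u ∈ ({a, b, c} : Finset _), u ≠ v ∧ joinP4.Adj u w := by
  revert a b c; decide

theorem joinP4_adj_zero_zero (s t : Fin 2) : joinP4.Adj (s, 0) (t, 0) ↔ s ≠ t := by
  revert s t; decide

theorem Gk_adj_mk_mk {k : ℕ} (i : Fin k) (a b : Fin 2 × Fin 4) :
    (Gk k).Adj (i, a) (i, b) ↔ joinP4.Adj a b := by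
  obtain ⟨⟨s, p⟩, ⟨t, q⟩⟩ := (⟨a, b⟩ : _ × _)
  simp only [Gk, joinP4, SimpleGraph.fromRel_adj]
  fin_cases s <;> fin_cases t <;> simp <;> omega

theorem Gk_adj_mk_of_ne_two {k : ℕ} {i : Fin k} {a : Fin 2 × Fin 4} (ha : a.2 ≠ 2)
    {x : Fin k × Fin 2 × Fin 4} (h : (Gk k).Adj (i, a) x) :
    ∃ b, x = (i, b) ∧ joinP4.Adj a b := by
  obtain ⟨j, b⟩ := x
  obtain rfl : j = i := by
    simp only [Gk, SimpleGraph.fromRel_adj] at h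
    grind
  exact ⟨b, rfl, (Gk_adj_mk_mk j a b).1 h⟩

theorem Gk_card_filter_fst_le_two {k : ℕ} {S : Finset (Fin k × Fin 2 × Fin 4)}
    (hS : isOOIrr (Gk k) ↑S) (i : Fin k) : #{a ∈ S | a.1 = i} ≤ 2 := by
  by_contra! h
  obtain ⟨x, hx, y, hy, z, hz, hxy, hxz, hyz⟩ := two_lt_card.1 h
  simp only [mem_filter] at hx hy hz
  have hmem : ∀ t ∈ ({x.2, y.2, z.2} : Finset _), (i, t) ∈ S := by
    simp only [mem_insert, mem_singleton]
    rintro t (rfl | rfl | rfl)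
    exacts [hx.2 ▸ hx.1, hy.2 ▸ hy.1, hz.2 ▸ hz.1]
  have snd_ne {a b : Fin k × Fin 2 × Fin 4} (ha : a.1 = i) (hb : b.1 = i) (hab : a ≠ b) :
      a.2 ≠ b.2 := fun e => hab (Prod.ext (ha.trans hb.symm) e)
  obtain ⟨v, hv, hv2, hcov⟩ := joinP4_exists_covered_of_three
    (snd_ne hx.2 hy.2 hxy) (snd_ne hx.2 hz.2 hxz) (snd_ne hy.2 hz.2 hyz)
  obtain ⟨w, hvw, hpriv⟩ := hS (i, v) (hmem v hv)
  obtain ⟨b, rfl, hvb⟩ := Gk_adj_mk_of_ne_two hv2 hvw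
  obtain ⟨u, hu, huv, hub⟩ := hcov b hvb
  exact hpriv (i, u) (hmem u hu) (by simpa using huv) ((Gk_adj_mk_mk i u b).2 hub)

theorem card_le_of_isOOIrr_Gk {k : ℕ} {S : Finset (Fin k × Fin 2 × Fin 4)}
    (hS : isOOIrr (Gk k) ↑S) : #S ≤ 2 * k := by
  simpa using card_le_mul_card_image_of_maps_to (fun a _ => mem_univ a.1) 2
    fun i _ => Gk_card_filter_fst_le_two hS i

/-- The vertices `u_{i,s}`. -/
def pathStarts (k : ℕ) : Finset (Fin k × Fin 2 × Fin 4) := {a | a.2.2 = 0}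

theorem card_pathStarts (k : ℕ) : #(pathStarts k) = 2 * k := by
  rw [pathStarts, card_filter, Fintype.sum_prod_type]
  simp only [sum_boole, sum_const, card_univ, Fintype.card_fin, smul_eq_mul]
  rw [mul_comm]
  rfl

theorem isOOIrr_Gk_pathStarts (k : ℕ) : isOOIrr (Gk k) ↑(pathStarts k) := by
  rintro ⟨i, s, p⟩ hv
  obtain rfl : p = 0 := by simpa [pathStarts] using hv
  refine ⟨(i, s + 1, 0), (Gk_adj_mk_mk i _ _).2 ((joinP4_adj_zero_zero _ _).2 (by omega)), ?_⟩
  rintro ⟨j, t, q⟩ hu hne hadj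
  obtain rfl : q = 0 := by simpa [pathStarts] using hu
  obtain ⟨b, hb, htb⟩ := Gk_adj_mk_of_ne_two (by simp) hadj
  obtain ⟨rfl, rfl⟩ := Prod.mk.inj hb
  rw [joinP4_adj_zero_zero] at htb
  exact hne (by congr; omega)

theorem stmt11_general (k : ℕ) :
    (∀ S : Finset (Fin k × Fin 2 × Fin 4), isOOIrr (Gk k) ↑S →
      ∀ i : Fin k, (S.filter (fun a => a.1 = i)).card ≤ 2) ∧
    ooirNum (Gk k) = 2 * k :=
  ⟨fun _ hS => Gk_card_filter_fst_le_two hS,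
    ooirNum_eq ⟨pathStarts k, isOOIrr_Gk_pathStarts k, card_pathStarts k⟩
      fun _ => card_le_of_isOOIrr_Gk⟩

/-- Every open-open irredundant set of `G_k` has at most two vertices in each copy
`H_i`, and `OOIR(G_k) = 2k`. -/
theorem stmt11 (k : ℕ) (hk : 1 ≤ k) :
    (∀ S : Finset (Fin k × Fin 2 × Fin 4), isOOIrr (Gk k) ↑S →
      ∀ i : Fin k, (S.filter (fun a => a.1 = i)).card ≤ 2) ∧
    ooirNum (Gk k) = 2 * k :=
  stmt11_general k
end

section
/- If T is a tree of order n, then T has a total dominating sequence of length n (equivalently, the Grundy total domination number of T equals n) if and only if T has a perfect matching. -/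
variable {V : Type*}

/-!
Let `v₁, …, vₙ` be a total dominating sequence through all `n` vertices, with footprints `wᵢ`
(`wᵢ` is adjacent to `vᵢ` but to no earlier vertex). The `wᵢ` are pairwise distinct, so every
vertex `x` is the footprint of exactly one vertex `d x`, which is then the first neighbour of `x`
in the sequence. As `x` is a neighbour of `d x`, the permutation `d ∘ d` never moves a vertex
later in the sequence, so it is the identity: `d` pairs every vertex with a neighbour, which is a
perfect matching.

Conversely, let `f` be a perfect matching of a forest. Take a leaf `u`; its partner is its only
neighbour `f u`. Order the forest without `u, f u` recursively as `L` and take `u, L, f u`. In this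
order each vertex `x` footprints `f x`, i.e. no earlier vertex is adjacent to `f x`.
-/

open Function

theorem Function.Bijective.eq_id_of_forall_comp_le {α : Type*} [Fintype α] {π : α → α}
    (hπ : Bijective π) {r : α → ℕ} (hr : Injective r) (hle : ∀ x, r (π x) ≤ r x) : π = id := by
  have hsum : ∑ x, r (π x) = ∑ x, r x := Equiv.sum_comp (Equiv.ofBijective π hπ) r
  funext x
  exact hr ((Finset.sum_eq_sum_iff_of_le fun x _ => hle x).mp hsum x (Finset.mem_univ x))

theorem List.Nodup.forall_mem_iff_length_eq_card {α : Type*} [Fintype α] {l : List α}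
    (hl : l.Nodup) : (∀ x, x ∈ l) ↔ l.length = Fintype.card α := by
  classical
  rw [← List.toFinset_card_of_nodup hl, Finset.card_eq_iff_eq_univ, Finset.eq_univ_iff_forall]
  simp only [List.mem_toFinset]

namespace SimpleGraph

variable {G : SimpleGraph V}

theorem exists_isPerfectMatching_iff_exists_involutive :
    (∃ M : G.Subgraph, M.IsPerfectMatching) ↔ ∃ f : V → V, Involutive f ∧ ∀ v, G.Adj v (f v) := by
  constructor
  · rintro ⟨M, hM⟩
    choose f hf hfu using Subgraph.isPerfectMatching_iff.mp hM
    exact ⟨f, fun v => (hfu (f v) v (hf v).symm).symm, fun v => M.adj_sub (hf v)⟩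
  · rintro ⟨f, hf, hadj⟩
    have hle : fromRel (fun a b => f a = b) ≤ G := by
      rintro a b ⟨-, rfl | rfl⟩
      exacts [hadj a, (hadj b).symm]
    refine ⟨G.toSubgraph _ hle, Subgraph.isPerfectMatching_iff.mpr fun v => ⟨f v, ?_, ?_⟩⟩
    · simp [(hadj v).ne]
    · rintro w ⟨-, h | h⟩
      exacts [h.symm, hf.eq_iff.mp h]

theorem IsAcyclic.exists_adj_forall_adj_eq [Finite V] (hG : G.IsAcyclic) {x y : V}
    (hxy : G.Adj x y) : ∃ u v, G.Adj u v ∧ ∀ w, G.Adj u w → w = v := by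
  have : Nonempty V := ⟨x⟩
  obtain ⟨u, _, p, hp, hmax⟩ := Walk.exists_isPath_forall_isPath_length_le_length G
  have hnil : ¬p.Nil := fun h => by
    have := hmax x y (Walk.cons hxy .nil) (by simp [hxy.ne])
    simp [(Walk.length_eq_zero_iff.mpr h)] at this
  refine ⟨u, p.snd, p.adj_snd hnil, fun w huw => hG.eq_snd_of_adj_start hp huw ?_⟩
  by_contra hw
  have := hmax _ _ (p.cons huw.symm) (hp.cons hw)
  simp at this

theorem exists_involutive_adj_of_footprints [Fintype V] (r : V → ℕ) (hr : Injective r)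
    (hfp : ∀ y, ∃ w, G.Adj y w ∧ ∀ z, r z < r y → ¬G.Adj z w) :
    ∃ f : V → V, Involutive f ∧ ∀ v, G.Adj v (f v) := by
  choose φ hadj hfirst using hfp
  have hφ : Injective φ := by
    intro y y' h
    by_contra hne
    rcases (hr.ne hne).lt_or_gt with hlt | hlt
    · exact hfirst y' y hlt (h ▸ hadj y)
    · exact hfirst y y' hlt (h ▸ hadj y')
  set d := (Equiv.ofBijective φ (Finite.injective_iff_bijective.mp hφ)).symm
  have hφd : ∀ x, φ (d x) = x := Equiv.ofBijective_apply_symm_apply _ _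
  have hd_adj : ∀ x, G.Adj (d x) x := fun x => by simpa only [hφd] using hadj (d x)
  have hd_min : ∀ x z, G.Adj z x → r (d x) ≤ r z := fun x z hz => by
    by_contra! h
    exact hfirst (d x) z h (by rwa [hφd])
  have hdd : d ∘ d = id := (d.bijective.comp d.bijective).eq_id_of_forall_comp_le hr
    fun x => hd_min (d x) x (hd_adj x).symm
  exact ⟨d, congrFun hdd, fun v => (hd_adj v).symm⟩

theorem pairwise_cons_append_of_forall_adj_eq {f : V → V} (hf : Involutive f) {u : V}
    (hu : ∀ w, G.Adj u w → w = f u) {L : List V} (hL : ∀ x ∈ L, x ≠ u ∧ x ≠ f u)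
    (hpw : L.Pairwise fun y x => ¬G.Adj y (f x)) :
    (u :: (L ++ [f u])).Pairwise fun y x => ¬G.Adj y (f x) := by
  refine List.pairwise_cons.mpr ⟨?_, List.pairwise_append.mpr ⟨hpw, by simp, ?_⟩⟩
  · rintro x hx hux
    rcases List.mem_append.mp hx with hx | hx
    · exact (hL x hx).1 (hf.injective (hu _ hux))
    · rw [List.mem_singleton.mp hx, hf u] at hux
      exact G.irrefl hux
  · rintro a ha _ hb hau
    rw [List.mem_singleton.mp hb, hf u] at hau
    exact (hL a ha).2 (hu a hau.symm)

theorem IsAcyclic.exists_list_pairwise [Fintype V] (hG : G.IsAcyclic) {f : V → V}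
    (hf : Involutive f) (hadj : ∀ v, G.Adj v (f v)) :
    ∃ L : List V, (∀ v, v ∈ L) ∧ L.Pairwise fun y x => ¬G.Adj y (f x) := by
  refine Fintype.induction_subsingleton_or_nontrivial
    (P := fun W _ => ∀ (H : SimpleGraph W) (g : W → W), H.IsAcyclic → Involutive g →
      (∀ v, H.Adj v (g v)) → ∃ L : List W, (∀ v, v ∈ L) ∧ L.Pairwise fun y x => ¬H.Adj y (g x))
    V ?_ ?_ G f hG hf hadj
  · intro W _ _ H g _ _ hadj
    exact ⟨[], fun v => absurd (Subsingleton.elim v (g v)) (hadj v).ne, by simp⟩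
  · intro W _ _ ih H g hH hg hadj
    classical
    obtain ⟨u, v, -, hu⟩ := hH.exists_adj_forall_adj_eq (hadj (Classical.arbitrary W))
    obtain rfl : g u = v := hu _ (hadj u)
    set s : Set W := {x | x ≠ u ∧ x ≠ g u}
    have hgs : Set.MapsTo g s s := fun x hx =>
      ⟨fun h => hx.2 (hg.eq_iff.mp h), fun h => hx.1 (hg.injective h)⟩
    obtain ⟨L, hmem, hpw⟩ := ih s (Fintype.card_subtype_lt (x := u) fun h => h.1 rfl)
      (H.induce s) (hgs.restrict g s s) (hH.induce s) (fun x => Subtype.ext (hg x)) (hadj ·)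
    refine ⟨u :: (L.map Subtype.val ++ [g u]), fun x => ?_,
      pairwise_cons_append_of_forall_adj_eq hg hu ?_ (List.pairwise_map.mpr hpw)⟩
    · by_cases hx : x ∈ s
      · exact List.mem_cons_of_mem _ (List.mem_append_left _ (List.mem_map_of_mem (hmem ⟨x, hx⟩)))
      · simp only [s, Set.mem_ofPred_eq, not_and_or, not_not] at hx
        rcases hx with rfl | rfl <;> simp
    · simp only [List.mem_map]
      rintro _ ⟨x, -, rfl⟩
      exact x.2

end SimpleGraph

theorem isTDSeq.exists_involutive_adj [Fintype V] {G : SimpleGraph V} {L : List V}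
    (hL : isTDSeq G L) (hlen : L.length = Fintype.card V) :
    ∃ f : V → V, Involutive f ∧ ∀ v, G.Adj v (f v) := by
  classical
  obtain ⟨hnd, -, hstep⟩ := hL
  have hmem := hnd.forall_mem_iff_length_eq_card.mpr hlen
  refine G.exists_involutive_adj_of_footprints (L.idxOf ·)
    (fun x y h => (List.idxOf_inj (hmem x)).mp h) fun y => ?_
  obtain ⟨w, hyw, hw⟩ := hstep _ (List.idxOf_lt_length_iff.mpr (hmem y))
  refine ⟨w, by rwa [List.getElem_idxOf] at hyw, fun z hz => hw z ?_⟩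
  exact List.mem_take_iff_getElem.mpr
    ⟨_, lt_min hz (List.idxOf_lt_length_iff.mpr (hmem z)), List.getElem_idxOf _⟩

theorem isTDSeq_of_pairwise {G : SimpleGraph V} {f : V → V} (hadj : ∀ v, G.Adj v (f v))
    {L : List V} (hmem : ∀ v, v ∈ L) (hpw : L.Pairwise fun y x => ¬G.Adj y (f x)) :
    isTDSeq G L := by
  refine ⟨hpw.imp fun {y x} h (e : y = x) => h (e ▸ hadj x), fun v => ⟨f v, hmem (f v), hadj v⟩,
    fun i hi => ⟨f L[i], hadj _, fun u hu => ?_⟩⟩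
  obtain ⟨j, hj, rfl⟩ := List.mem_take_iff_getElem.mp hu
  exact List.pairwise_iff_getElem.mp hpw j i _ hi (lt_min_iff.mp hj).1

/-- A tree of order `n` has a total dominating sequence of length `n` iff it has a
perfect matching. -/
theorem stmt16 [Fintype V] (G : SimpleGraph V) (hT : G.IsTree) :
    (∃ L : List V, isTDSeq G L ∧ L.length = Fintype.card V) ↔
    ∃ M : SimpleGraph.Subgraph G, M.IsPerfectMatching := by
  rw [SimpleGraph.exists_isPerfectMatching_iff_exists_involutive]
  constructor
  · rintro ⟨L, hL, hlen⟩
    exact hL.exists_involutive_adj hlen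
  · rintro ⟨f, hf, hadj⟩
    obtain ⟨L, hmem, hpw⟩ := hT.isAcyclic.exists_list_pairwise hf hadj
    have hL := isTDSeq_of_pairwise hadj hmem hpw
    exact ⟨L, hL, hL.1.forall_mem_iff_length_eq_card.mp hmem⟩
end

section
/- If G is an isolate-free graph and A is an open-open irredundant set of G, then the vertices of A can be ordered into a sequence that is the initial segment of some total dominating sequence of G; consequently OOIR(G) ≤ γ_gr^t(G). -/
variable {V : Type*}

/-! Listing an open-open irredundant set `A` in any order gives a legal sequence: the private
neighbour of each vertex of `A` is not dominated by the vertices listed before it. A legal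
sequence that is not yet total dominating extends: some vertex `x` is undominated, any neighbour
`y` of `x` (there are no isolates) is new and footprints `x`. As every step adds a new vertex,
the extension stops at a total dominating sequence whose first `|A|` terms are `A`. -/
namespace SimpleGraph

variable {G : SimpleGraph V}

def IsTDLegal (G : SimpleGraph V) (L : List V) : Prop :=
  ∀ (i : ℕ) (h : i < L.length), ∃ w, G.Adj L[i] w ∧ ∀ u ∈ L.take i, ¬ G.Adj u w

theorem IsTDLegal.append_singleton {L : List V} (hL : G.IsTDLegal L) {x y : V}
    (hyx : G.Adj y x) (hx : ∀ u ∈ L, ¬ G.Adj u x) : G.IsTDLegal (L ++ [y]) := by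
  intro i hi
  rcases lt_or_eq_of_le (Nat.le_of_lt_succ (by simpa using hi)) with hi | rfl
  · obtain ⟨w, hiw, hw⟩ := hL i hi
    refine ⟨w, by rwa [List.getElem_append_left hi], fun u hu => hw u ?_⟩
    rwa [List.take_append_of_le_length hi.le] at hu
  · exact ⟨x, by simpa using hyx, by simpa using hx⟩

theorem isTDLegal_of_isOOIrr {L : List V} (hL : L.Nodup) (h : isOOIrr G {v | v ∈ L}) :
    G.IsTDLegal L := by
  intro i hi
  obtain ⟨w, hiw, hw⟩ := h L[i] (L.getElem_mem hi)
  refine ⟨w, hiw, fun u hu => hw u (List.mem_of_mem_take hu) ?_⟩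
  rintro rfl
  obtain ⟨j, hj, hji⟩ := List.mem_take_iff_getElem.mp hu
  have := hL.getElem_inj_iff.mp hji
  omega

theorem exists_isTDSeq_prefix [Fintype V] (hG : ∀ v : V, ∃ w, G.Adj v w) (L : List V)
    (hnd : L.Nodup) (hL : G.IsTDLegal L) : ∃ L', isTDSeq G L' ∧ L <+: L' := by
  by_cases hTD : isTDSet G {v | v ∈ L}
  · exact ⟨L, ⟨hnd, hTD, hL⟩, List.prefix_refl L⟩
  obtain ⟨x, hx⟩ : ∃ x, ∀ u ∈ L, ¬ G.Adj u x := by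
    simpa [isTDSet, G.adj_comm] using hTD
  obtain ⟨y, hxy⟩ := hG x
  have hy : y ∉ L := fun hy => hx y hy hxy.symm
  have hnd' : (L ++ [y]).Nodup := List.concat_eq_append ▸ hnd.concat hy
  obtain ⟨L', hL', hpre⟩ :=
    exists_isTDSeq_prefix hG (L ++ [y]) hnd' (hL.append_singleton hxy.symm hx)
  exact ⟨L', hL', (List.prefix_append L [y]).trans hpre⟩
termination_by Fintype.card V - L.length
decreasing_by
  have := hnd'.length_le_card
  simp only [List.length_append, List.length_singleton] at this ⊢
  omega

theorem exists_isTDSeq_take_toFinset_eq_of_isOOIrr [Fintype V] [DecidableEq V]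
    (hG : ∀ v : V, ∃ w, G.Adj v w) {A : Finset V} (hA : isOOIrr G ↑A) :
    ∃ L : List V, isTDSeq G L ∧ (L.take A.card).toFinset = A := by
  have hlegal : G.IsTDLegal A.toList :=
    isTDLegal_of_isOOIrr A.nodup_toList (by
      rwa [show {v | v ∈ A.toList} = (A : Set V) from Set.ext fun _ => Finset.mem_toList])
  obtain ⟨L, hL, hpre⟩ := exists_isTDSeq_prefix hG A.toList A.nodup_toList hlegal
  refine ⟨L, hL, ?_⟩
  rw [← Finset.length_toList, ← List.prefix_iff_eq_take.mp hpre, Finset.toList_toFinset]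

theorem length_le_grundyTD [Fintype V] {L : List V} (hL : isTDSeq G L) :
    L.length ≤ grundyTD G :=
  le_csSup ⟨Fintype.card V, by rintro n ⟨L, hL, rfl⟩; exact hL.1.length_le_card⟩ ⟨L, hL, rfl⟩

end SimpleGraph

/-- In an isolate-free graph, any open-open irredundant set can be ordered into the
initial segment of a total dominating sequence; consequently `OOIR(G) ≤ γ_gr^t(G)`. -/
theorem stmt17 [Fintype V] [DecidableEq V] (G : SimpleGraph V)
    (hG : ∀ v : V, ∃ w, G.Adj v w) (A : Finset V) (hA : isOOIrr G ↑A) :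
    (∃ L : List V, isTDSeq G L ∧ (L.take A.card).toFinset = A) ∧
    ooirNum G ≤ grundyTD G := by
  refine ⟨SimpleGraph.exists_isTDSeq_take_toFinset_eq_of_isOOIrr hG hA, ?_⟩
  refine csSup_le ⟨0, ∅, by simp [isOOIrr], rfl⟩ ?_
  rintro _ ⟨S, hS, rfl⟩
  obtain ⟨L, hL, hLS⟩ :=
    SimpleGraph.exists_isTDSeq_take_toFinset_eq_of_isOOIrr hG hS
  calc S.card = (L.take S.card).toFinset.card := by rw [hLS]
    _ ≤ (L.take S.card).length := List.toFinset_card_le _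
    _ ≤ L.length := List.length_take_le' _ _
    _ ≤ grundyTD G := SimpleGraph.length_le_grundyTD hL
end
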